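/- arXiv:0708.4036 — 2 statements merged into one kernel-verified Lean document; each statement's English description precedes it below -/
import Mathlib

section
/- A region F is unbounded if and only if δ'(F) contains a simple root. -/
open scoped RealInnerProductSpace

/-- A finite reduced crystallographic root system spanning a real inner
product space `V` (whose inner product is automatically invariant under the
Weyl group, since the reflections are isometries), together with a fixed
system of positive roots and the corresponding simple roots. -/
structure RootSystemData (V : Type)
    [NormedAddCommGroup V] [InnerProductSpace ℝ V] : Type where
  roots : Finset V
  pos : Finset V
  simples : Finset V
  zero_not_mem : (0 : V) ∉ roots
  span_roots : Submodule.span ℝ (roots : Set V) = ⊤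
  crystallographic : ∀ α ∈ roots, ∀ β ∈ roots,
    ∃ n : ℤ, 2 * ⟪α, β⟫ = (n : ℝ) * ⟪β, β⟫
  reduced : ∀ α ∈ roots, ∀ t : ℝ, t • α ∈ roots → t = 1 ∨ t = -1
  reflect_mem : ∀ α ∈ roots, ∀ β ∈ roots,
    β - (2 * ⟪β, α⟫ / ⟪α, α⟫) • α ∈ roots
  pos_subset : pos ⊆ roots
  mem_pos_or_neg_mem_pos : ∀ α ∈ roots, α ∈ pos ∨ -α ∈ pos
  neg_not_pos : ∀ α ∈ pos, -α ∉ pos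
  simples_subset : simples ⊆ pos
  simples_linearIndependent : LinearIndependent ℝ (fun α : simples => (α : V))
  pos_sum_of_simples : ∀ β ∈ pos, ∃ c : V →₀ ℕ,
    (c.support : Set V) ⊆ (simples : Set V) ∧ β = c.sum fun α n => (n : ℝ) • α

namespace RootSystemData

variable {V : Type} [NormedAddCommGroup V] [InnerProductSpace ℝ V]
variable (R : RootSystemData V)

/-- `β₁ > β₂` : the difference `β₁ - β₂` is a nonempty sum of positive roots. -/
def Gt (x y : V) : Prop :=
  ∃ m : Multiset V, m ≠ 0 ∧ (∀ z ∈ m, z ∈ R.pos) ∧ x - y = m.sum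

/-- `β₁ ≥ β₂` : either `β₁ > β₂` or `β₁ = β₂`. -/
def Ge (x y : V) : Prop := R.Gt x y ∨ x = y

/-- An antichain: a set of pairwise incomparable positive roots. -/
def IsRootAntichain (A : Set V) : Prop :=
  A ⊆ (R.pos : Set V) ∧ ∀ x ∈ A, ∀ y ∈ A, x ≠ y → ¬ R.Ge x y ∧ ¬ R.Ge y x

/-- An orthogonal antichain: an antichain of pairwise orthogonal positive roots. -/
def IsOrthAntichain (A : Set V) : Prop :=
  R.IsRootAntichain A ∧ ∀ x ∈ A, ∀ y ∈ A, x ≠ y → ⟪x, y⟫ = 0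

/-- The complement, inside the open dominant Weyl chamber, of the hyperplane
arrangement `⟨β,·⟩ = 1`, `β ∈ Δ⁺`. -/
def chamberSet : Set V :=
  {χ | (∀ α ∈ R.simples, 0 < ⟪α, χ⟫) ∧ ∀ β ∈ R.pos, ⟪β, χ⟫ ≠ 1}

/-- A region: a connected component of `chamberSet`. -/
def IsRegion (F : Set V) : Prop :=
  ∃ χ ∈ R.chamberSet, F = connectedComponentIn R.chamberSet χ

/-- The positive roots `β` with `⟨β,·⟩ < 1` on `F`. -/
def ltOne (F : Set V) : Set V := {β | β ∈ R.pos ∧ ∀ χ ∈ F, ⟪β, χ⟫ < 1}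

/-- The positive roots `β` with `⟨β,·⟩ > 1` on `F`. -/
def gtOne (F : Set V) : Set V := {β | β ∈ R.pos ∧ ∀ χ ∈ F, 1 < ⟪β, χ⟫}

/-- `δ(F)`: the maximal roots among the positive roots `β` with `⟨β,·⟩ < 1` on `F`. -/
def deltaLow (F : Set V) : Set V :=
  {β | β ∈ R.ltOne F ∧ ∀ β' ∈ R.ltOne F, ¬ R.Gt β' β}

/-- `δ'(F)`: the minimal roots among the positive roots `β` with `⟨β,·⟩ > 1` on `F`. -/
def deltaHigh (F : Set V) : Set V :=
  {β | β ∈ R.gtOne F ∧ ∀ β' ∈ R.gtOne F, ¬ R.Gt β β'}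

/-- Simply laced: all roots have the same length, normalized so `⟨β,β⟩ = 2`. -/
def SimplyLaced : Prop := ∀ β ∈ R.roots, ⟪β, β⟫ = 2

/-- Irreducibility: the set of roots admits no nontrivial partition into two
mutually orthogonal parts. -/
def IsIrreducible : Prop :=
  ∀ S : Set V, S ⊆ (R.roots : Set V) →
    (∀ a ∈ S, ∀ b ∈ (R.roots : Set V) \ S, ⟪a, b⟫ = 0) →
    S = ∅ ∨ S = (R.roots : Set V)

/-- The height of a positive root: the sum of its (unique) coordinates in the
simple roots. -/
noncomputable def height (β : V) : ℕ :=
  letI := Classical.propDecidable (∃ c : V →₀ ℕ, (c.support : Set V) ⊆ (R.simples : Set V) ∧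
      β = c.sum (fun α n => (n : ℝ) • α))
  if h : ∃ c : V →₀ ℕ, (c.support : Set V) ⊆ (R.simples : Set V) ∧
      β = c.sum (fun α n => (n : ℝ) • α)
  then (Classical.choose h).sum fun _ n => n
  else 0

/-- The root system has the Cartan–Killing type given by the (simply laced)
Cartan matrix `A`: there is an indexing of the simple roots under which, in the
normalization `⟨β,β⟩ = 2`, the inner products of simple roots are the entries
of `A`. -/
def HasType {n : ℕ} (A : Matrix (Fin n) (Fin n) ℤ) : Prop :=
  ∃ e : Fin n ≃ {x // x ∈ R.simples},
    ∀ i j, ⟪((e i : V)), ((e j : V))⟫ = (A i j : ℝ)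

/-- The reflections `s_β`, `β ∈ S`, as linear isometries of `V`. -/
def reflectionsOn (S : Set V) : Set (V ≃ₗᵢ[ℝ] V) :=
  {g | ∃ β ∈ S, ∀ v, g v = v - (2 * ⟪v, β⟫ / ⟪β, β⟫) • β}

/-- The Weyl group `W`, generated by the reflections in all roots. -/
def weyl : Subgroup (V ≃ₗᵢ[ℝ] V) :=
  Subgroup.closure (reflectionsOn (R.roots : Set V))

/-- The reflection subgroup generated by the reflections `s_β`, `β ∈ S`. -/
def weylOf (S : Set V) : Subgroup (V ≃ₗᵢ[ℝ] V) :=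
  Subgroup.closure (reflectionsOn S)

/-- `Δ_S = Δ ∩ span_ℝ(S)`. -/
def rootsIn (S : Set V) : Set V :=
  {β | β ∈ R.roots ∧ β ∈ Submodule.span ℝ S}

/-- `Δ_S⁺ = Δ⁺ ∩ span_ℝ(S)`. -/
def posIn (S : Set V) : Set V :=
  {β | β ∈ R.pos ∧ β ∈ Submodule.span ℝ S}

/-- The inversion set `N(w) = {β ∈ Δ⁺ : w(β) ∈ -Δ⁺}`. -/
def inversionSet (w : V ≃ₗᵢ[ℝ] V) : Set V :=
  {β | β ∈ R.pos ∧ -(w β) ∈ R.pos}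

end RootSystemData

/-!
Simple roots are minimal among positive roots, so a simple root `α` lies in `δ'(F)` as soon as
`⟨α,·⟩ > 1` on `F`. If this holds for no simple root, then `0 < ⟨α,·⟩ < 1` on `F` for every simple
`α`, and this box is bounded because the simple roots form a basis. Conversely, if `⟨α,·⟩ > 1` on
`F`, move a point of `F` along the fundamental coweight `v` of `α`: for a positive root `β`, either
`α` does not occur in `β`, and `⟨β,·⟩` is constant along the ray, or it does, and
`⟨β,·⟩ ≥ ⟨α,·⟩ > 1` along the ray. So the ray crosses no hyperplane and stays in `F`.
-/

lemma not_isBounded_of_forall_exists_lt_inner {V : Type*} [NormedAddCommGroup V]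
    [InnerProductSpace ℝ V] {F : Set V} (a : V)
    (h : ∀ r : ℝ, ∃ x ∈ F, r < ⟪a, x⟫) : ¬ Bornology.IsBounded F := by
  intro hF
  obtain ⟨C, hC⟩ := isBounded_iff_forall_norm_le.mp hF
  obtain ⟨x, hx, hlt⟩ := h (‖a‖ * C)
  exact hlt.not_ge <| (real_inner_le_norm a x).trans <|
    mul_le_mul_of_nonneg_left (hC x hx) (norm_nonneg a)

namespace Module.Basis

variable {ι V : Type*} [NormedAddCommGroup V] [InnerProductSpace ℝ V]

lemma injective_pi_innerₛₗ (b : Basis ι ℝ V) :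
    Function.Injective (LinearMap.pi fun i => innerₛₗ ℝ (b i)) := fun _ _ h =>
  InnerProductSpace.ext_inner_left_basis b fun i => congrFun h i

lemma exists_inner_eq [Fintype ι] (b : Basis ι ℝ V) (g : ι → ℝ) :
    ∃ v : V, ∀ i, ⟪b i, v⟫ = g i := by
  have := Module.Finite.of_basis b
  have hdim : Module.finrank ℝ V = Module.finrank ℝ (ι → ℝ) := by
    rw [Module.finrank_eq_card_basis b, Module.finrank_fintype_fun_eq_card]
  obtain ⟨v, hv⟩ := (LinearMap.injective_iff_surjective_of_finrank_eq_finrank hdim).mp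
    b.injective_pi_innerₛₗ g
  exact ⟨v, fun i => congrFun hv i⟩

lemma isBounded_setOf_inner_mem [Fintype ι] (b : Basis ι ℝ V) {s : Set (ι → ℝ)}
    (hs : Bornology.IsBounded s) : Bornology.IsBounded {x : V | (fun i => ⟪b i, x⟫) ∈ s} := by
  have := Module.Finite.of_basis b
  obtain ⟨K, -, hK⟩ := (LinearMap.pi fun i => innerₛₗ ℝ (b i)).exists_antilipschitzWith
    (LinearMap.ker_eq_bot.mpr b.injective_pi_innerₛₗ)
  exact hK.isBounded_preimage hs

end Module.Basis

namespace RootSystemData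

variable {V : Type} [NormedAddCommGroup V] [InnerProductSpace ℝ V] (R : RootSystemData V)

def closedDominantChamber : Set V := {x | ∀ α ∈ R.simples, 0 ≤ ⟪α, x⟫}

lemma ne_zero_of_mem_pos {β : V} (hβ : β ∈ R.pos) : β ≠ 0 :=
  fun h => R.zero_not_mem (h ▸ R.pos_subset hβ)

lemma span_simples : Submodule.span ℝ (R.simples : Set V) = ⊤ := by
  have hpos : ∀ β ∈ R.pos, β ∈ Submodule.span ℝ (R.simples : Set V) := by
    intro β hβ
    obtain ⟨c, hc, rfl⟩ := R.pos_sum_of_simples β hβ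
    exact Submodule.sum_mem _ fun α hα =>
      Submodule.smul_mem _ _ (Submodule.subset_span (hc hα))
  rw [eq_top_iff, ← R.span_roots, Submodule.span_le]
  intro α hα
  rcases R.mem_pos_or_neg_mem_pos α hα with h | h
  · exact hpos α h
  · simpa using Submodule.neg_mem _ (hpos _ h)

noncomputable def simplesBasis : Module.Basis R.simples ℝ V :=
  .mk R.simples_linearIndependent (by simp [R.span_simples])

@[simp] lemma simplesBasis_apply (i : R.simples) : R.simplesBasis i = i :=
  Module.Basis.mk_apply _ _ _

lemma inner_simple_le_inner {α β x : V} {c : V →₀ ℕ}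
    (hc : (c.support : Set V) ⊆ R.simples) (hβ : β = c.sum fun α n => (n : ℝ) • α)
    (hx : x ∈ R.closedDominantChamber) (hα : α ∈ c.support) : ⟪α, x⟫ ≤ ⟪β, x⟫ := by
  have hcα : (1 : ℝ) ≤ c α := by
    exact_mod_cast Nat.one_le_iff_ne_zero.mpr (Finsupp.mem_support_iff.mp hα)
  calc ⟪α, x⟫ ≤ (c α : ℝ) * ⟪α, x⟫ := le_mul_of_one_le_left (hx α (hc hα)) hcα
    _ ≤ ∑ α' ∈ c.support, (c α' : ℝ) * ⟪α', x⟫ :=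
      Finset.single_le_sum (fun α' h' => mul_nonneg (Nat.cast_nonneg _) (hx α' (hc h'))) hα
    _ = ⟪β, x⟫ := by simp only [hβ, Finsupp.sum, sum_inner, real_inner_smul_left]

lemma one_le_inner_of_mem_pos {β ρ : V} (hρ : ∀ α ∈ R.simples, ⟪α, ρ⟫ = 1)
    (hβ : β ∈ R.pos) : 1 ≤ ⟪β, ρ⟫ := by
  obtain ⟨c, hc, hβc⟩ := R.pos_sum_of_simples β hβ
  obtain ⟨α, hα⟩ : c.support.Nonempty := Finsupp.support_nonempty_iff.mpr <| by
    rintro rfl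
    exact R.ne_zero_of_mem_pos hβ (by simpa using hβc)
  calc 1 = ⟪α, ρ⟫ := (hρ α (hc hα)).symm
    _ ≤ ⟪β, ρ⟫ := R.inner_simple_le_inner hc hβc (fun α' h' => (hρ α' h').symm ▸ zero_le_one) hα

lemma not_gt_of_mem_simples {α β : V} (hα : α ∈ R.simples) (hβ : β ∈ R.pos) :
    ¬ R.Gt α β := by
  rintro ⟨m, hm, hmpos, hαβ⟩
  -- `⟪·, ρ⟫` is the height: `1` on simple roots, `≥ 1` on positive roots, and additive.
  obtain ⟨ρ, hρ⟩ := R.simplesBasis.exists_inner_eq fun _ => 1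
  replace hρ : ∀ α ∈ R.simples, ⟪α, ρ⟫ = 1 := fun α h => by simpa using hρ ⟨α, h⟩
  have hcard : (Multiset.card m : ℝ) ≤ ⟪ρ, m.sum⟫ := by
    rw [← innerₛₗ_apply_apply, map_multiset_sum]
    simpa using Multiset.card_nsmul_le_sum (s := m.map (innerₛₗ ℝ ρ)) (a := 1) (by
      simpa [real_inner_comm ρ] using fun z hz => R.one_le_inner_of_mem_pos hρ (hmpos z hz))
  have hm1 : (1 : ℝ) ≤ Multiset.card m := by exact_mod_cast Multiset.card_pos.mpr hm
  have hβρ := R.one_le_inner_of_mem_pos hρ hβ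
  rw [← hαβ, inner_sub_right, real_inner_comm, hρ α hα] at hcard
  linarith [real_inner_comm ρ β]

lemma simple_mem_deltaHigh_iff {α : V} {F : Set V} (hα : α ∈ R.simples) :
    α ∈ R.deltaHigh F ↔ α ∈ R.gtOne F :=
  ⟨And.left, fun h => ⟨h, fun _ hβ => R.not_gt_of_mem_simples hα hβ.1⟩⟩

lemma inner_eq_zero_or_forall_inner_le {α β v : V}
    (hv : ∀ α' ∈ R.simples, α' ≠ α → ⟪α', v⟫ = 0) (hβ : β ∈ R.pos) :
    ⟪β, v⟫ = 0 ∨ ∀ x ∈ R.closedDominantChamber, ⟪α, x⟫ ≤ ⟪β, x⟫ := by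
  obtain ⟨c, hc, hβc⟩ := R.pos_sum_of_simples β hβ
  by_cases hα : α ∈ c.support
  · exact .inr fun x hx => R.inner_simple_le_inner hc hβc hx hα
  · refine .inl ?_
    rw [hβc, Finsupp.sum, sum_inner]
    refine Finset.sum_eq_zero fun α' h' => ?_
    rw [real_inner_smul_left, hv α' (hc h') (ne_of_mem_of_not_mem h' hα), mul_zero]

lemma isBounded_of_forall_simples_mem_ltOne {F : Set V} (hF : F ⊆ R.chamberSet)
    (h : ∀ α ∈ R.simples, α ∈ R.ltOne F) : Bornology.IsBounded F := by
  refine (R.simplesBasis.isBounded_setOf_inner_mem (Metric.isBounded_Icc 0 1)).subset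
    fun χ hχ => ⟨fun i => ?_, fun i => ?_⟩
  · simpa using ((hF hχ).1 i i.2).le
  · simpa using ((h i i.2).2 χ hχ).le

lemma add_smul_mem_chamberSet {α χ v : V} (hα : α ∈ R.simples) (hχ : χ ∈ R.chamberSet)
    (hαχ : 1 < ⟪α, χ⟫) (hv : v ∈ R.closedDominantChamber)
    (hv_ne : ∀ α' ∈ R.simples, α' ≠ α → ⟪α', v⟫ = 0) {t : ℝ} (ht : 0 ≤ t) :
    χ + t • v ∈ R.chamberSet := by
  have h_inner (γ : V) : ⟪γ, χ + t • v⟫ = ⟪γ, χ⟫ + t * ⟪γ, v⟫ := by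
    rw [inner_add_right, real_inner_smul_right]
  have h_simples : ∀ α' ∈ R.simples, 0 < ⟪α', χ + t • v⟫ := fun α' h' => by
    rw [h_inner]
    exact add_pos_of_pos_of_nonneg (hχ.1 α' h') (mul_nonneg ht (hv α' h'))
  refine ⟨h_simples, fun β hβ => ?_⟩
  rcases R.inner_eq_zero_or_forall_inner_le hv_ne hβ with h0 | hle
  · rw [h_inner, h0, mul_zero, add_zero]
    exact hχ.2 β hβ
  · refine ne_of_gt ?_
    calc 1 < ⟪α, χ⟫ := hαχ
      _ ≤ ⟪α, χ + t • v⟫ := by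
        rw [h_inner]
        exact le_add_of_nonneg_right (mul_nonneg ht (hv α hα))
      _ ≤ ⟪β, χ + t • v⟫ := hle _ fun α' h' => (h_simples α' h').le

variable {R}

lemma IsRegion.subset_chamberSet {F : Set V} (hF : R.IsRegion F) : F ⊆ R.chamberSet := by
  obtain ⟨_, _, rfl⟩ := hF
  exact connectedComponentIn_subset _ _

lemma IsRegion.mem_ltOne_or_mem_gtOne {F : Set V} (hF : R.IsRegion F) {β : V}
    (hβ : β ∈ R.pos) : β ∈ R.ltOne F ∨ β ∈ R.gtOne F := by
  by_contra! h
  obtain ⟨χ₁, hχ₁F, h₁⟩ : ∃ χ ∈ F, 1 ≤ ⟪β, χ⟫ := by simpa [ltOne, hβ] using h.1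
  obtain ⟨χ₂, hχ₂F, h₂⟩ : ∃ χ ∈ F, ⟪β, χ⟫ ≤ 1 := by simpa [gtOne, hβ] using h.2
  obtain ⟨χ₀, -, rfl⟩ := hF
  obtain ⟨χ, hχ, hχβ⟩ := isPreconnected_connectedComponentIn.intermediate_value hχ₂F hχ₁F
    (continuous_const.inner continuous_id).continuousOn ⟨h₂, h₁⟩
  exact (connectedComponentIn_subset _ _ hχ).2 β hβ hχβ

lemma IsRegion.not_isBounded_of_mem_gtOne {F : Set V} (hF : R.IsRegion F) {α : V}
    (hα : α ∈ R.simples) (hαF : α ∈ R.gtOne F) : ¬ Bornology.IsBounded F := by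
  classical
  obtain ⟨χ₀, hχ₀, rfl⟩ := hF
  -- `v` is the fundamental coweight dual to `α`.
  obtain ⟨v, hv⟩ := R.simplesBasis.exists_inner_eq fun i => if (i : V) = α then 1 else 0
  replace hv : ∀ α' ∈ R.simples, ⟪α', v⟫ = if α' = α then 1 else 0 :=
    fun α' h' => by simpa using hv ⟨α', h'⟩
  have hv_dom : v ∈ R.closedDominantChamber := fun α' h' => by
    rw [hv α' h']
    split_ifs <;> norm_num
  have hv_ne : ∀ α' ∈ R.simples, α' ≠ α → ⟪α', v⟫ = 0 := fun α' h' hne => by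
    rw [hv α' h', if_neg hne]
  have h_α (t : ℝ) : ⟪α, χ₀ + t • v⟫ = ⟪α, χ₀⟫ + t := by
    rw [inner_add_right, real_inner_smul_right, hv α hα, if_pos rfl, mul_one]
  have hα₀ : 0 < ⟪α, χ₀⟫ := hχ₀.1 α hα
  have hα₁ : 1 < ⟪α, χ₀⟫ := hαF.2 χ₀ (mem_connectedComponentIn hχ₀)
  have h_ray : (fun t : ℝ => χ₀ + t • v) '' Set.Ici 0 ⊆ connectedComponentIn R.chamberSet χ₀ := by
    refine (isPreconnected_Ici.image _ (by fun_prop)).subset_connectedComponentIn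
      ⟨0, Set.self_mem_Ici, by simp⟩ ?_
    rintro _ ⟨t, ht, rfl⟩
    exact R.add_smul_mem_chamberSet hα hχ₀ hα₁ hv_dom hv_ne ht
  refine not_isBounded_of_forall_exists_lt_inner α fun r =>
    ⟨χ₀ + |r| • v, h_ray ⟨|r|, abs_nonneg r, rfl⟩, ?_⟩
  linarith [h_α |r|, le_abs_self r]

end RootSystemData

theorem statement3_general {V : Type} [NormedAddCommGroup V] [InnerProductSpace ℝ V]
    (R : RootSystemData V)
    (F : Set V) (hF : R.IsRegion F) :
    ¬ Bornology.IsBounded F ↔ ∃ α ∈ R.simples, α ∈ R.deltaHigh F := by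
  constructor
  · intro hF_unbounded
    by_contra! hδ
    refine hF_unbounded <|
      R.isBounded_of_forall_simples_mem_ltOne hF.subset_chamberSet fun α hα => ?_
    refine (hF.mem_ltOne_or_mem_gtOne (R.simples_subset hα)).resolve_right fun hgt => ?_
    exact hδ α hα ((R.simple_mem_deltaHigh_iff hα).mpr hgt)
  · rintro ⟨α, hα, hαF⟩
    exact hF.not_isBounded_of_mem_gtOne hα hαF.1

/-- A region `F` is unbounded if and only if `δ'(F)` contains a simple root. -/
theorem statement3 {V : Type} [NormedAddCommGroup V] [InnerProductSpace ℝ V]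
    [FiniteDimensional ℝ V] (R : RootSystemData V)
    (F : Set V) (hF : R.IsRegion F) :
    ¬ Bornology.IsBounded F ↔ ∃ α ∈ R.simples, α ∈ R.deltaHigh F :=
  statement3_general R F hF
end

section
/- Let I ⊆ Π and set 𝔞 = {v ∈ V : ⟨α,v⟩ = 0 for all α ∈ I}, N(𝔞) = {w ∈ W : w(𝔞) = 𝔞}, and C(𝔞,I) = {w ∈ N(𝔞) : w(Δ_I⁺) = Δ_I⁺}. Then W_I is a normal subgroup of N(𝔞), C(𝔞,I) ∩ W_I = {1}, and N(𝔞) = C(𝔞,I) · W_I; that is, N(𝔞) is the internal semidirect product C(𝔞,I) ⋉ W_I. -/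
open scoped RealInnerProductSpace

/-- The subgroup of isometries generated by the reflections `s_β`, `β ∈ S`. -/
def reflectionSubgroup {V : Type} [NormedAddCommGroup V] [InnerProductSpace ℝ V]
    (S : Set V) : Subgroup (V ≃ₗᵢ[ℝ] V) :=
  Subgroup.closure (RootSystemData.reflectionsOn S)

/-- `𝔞 = {v ∈ V : ⟨α,v⟩ = 0 for all α ∈ I}`. -/
def perpSpace {V : Type} [NormedAddCommGroup V] [InnerProductSpace ℝ V]
    (I : Finset V) : Set V := {v | ∀ α ∈ I, ⟪α, v⟫ = 0}

/-- `N(𝔞) = {w ∈ W : w(𝔞) = 𝔞}`. -/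
def normSet {V : Type} [NormedAddCommGroup V] [InnerProductSpace ℝ V]
    (R : RootSystemData V) (I : Finset V) : Set (V ≃ₗᵢ[ℝ] V) :=
  {w | w ∈ R.weyl ∧ (⇑w) '' perpSpace I = perpSpace I}

/-- `C(𝔞,I) = {w ∈ N(𝔞) : w(Δ_I⁺) = Δ_I⁺}`. -/
def compSet {V : Type} [NormedAddCommGroup V] [InnerProductSpace ℝ V]
    (R : RootSystemData V) (I : Finset V) : Set (V ≃ₗᵢ[ℝ] V) :=
  {w | w ∈ normSet R I ∧ (⇑w) '' R.posIn ↑I = R.posIn ↑I}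

/-!
`N(𝔞)` preserves `span I = 𝔞ᗮ`, so it conjugates a reflection `s_α`, `α ∈ I`, into the
reflection in the root `n α ∈ Δ_I`. The reflection in any root of `Δ_I` lies in `W_I`: a positive
`β ∈ Δ_I` pairs positively with some simple `γ` in its support (necessarily `γ ∈ I`), and
`s_γ β` is a positive root of `Δ_I` of height (`simpleBasis.sumCoords`) at most that of `β`
minus one, with `s_β = s_γ s_{s_γ β} s_γ`.

For `n ∈ N(𝔞)`, choose `u ∈ W_I` such that `n u` has the fewest inversions in `Δ_I⁺`. If there
were one, `n u` would invert a simple root `α ∈ I` (roots of `Δ_I⁺` are nonnegative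
combinations of `I`), and `n u s_α` would have one inversion fewer, because `s_α` permutes
`Δ_I⁺ \ {α}`. So `n u` maps the finite set `Δ_I⁺` into, hence onto, itself.

An element `w = s_{α₁} ⋯ s_{α_k}` of `C(𝔞,I) ∩ W_I` keeps `α_k` positive, so
`s_{α₁} ⋯ s_{α_{k-1}}` makes `α_k` negative and, by the exchange condition, `w` is a product of
`k - 1` of the same simple reflections; by induction `w = 1`.
-/

noncomputable section

section Reflection

variable {V : Type} [NormedAddCommGroup V] [InnerProductSpace ℝ V]

def hyperplaneReflection (β : V) : V ≃ₗᵢ[ℝ] V :=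
  (ℝ ∙ β)ᗮ.reflection

theorem hyperplaneReflection_apply (β v : V) :
    hyperplaneReflection β v = v - (2 * ⟪v, β⟫ / ⟪β, β⟫) • β := by
  rw [hyperplaneReflection, Submodule.reflection_orthogonal_apply,
    Submodule.reflection_singleton_apply, real_inner_self_eq_norm_sq, real_inner_comm]
  simp only [RCLike.ofReal_real_eq_id, id, neg_sub]
  module

theorem hyperplaneReflection_self (β : V) : hyperplaneReflection β β = -β :=
  Submodule.reflection_orthogonalComplement_singleton_eq_neg β

theorem hyperplaneReflection_apply_of_inner_eq_zero {β v : V} (h : ⟪β, v⟫ = 0) :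
    hyperplaneReflection β v = v :=
  Submodule.reflection_mem_subspace_eq_self (Submodule.mem_orthogonal_singleton_iff_inner_right.2 h)

@[simp]
theorem hyperplaneReflection_hyperplaneReflection (β v : V) :
    hyperplaneReflection β (hyperplaneReflection β v) = v :=
  Submodule.reflection_reflection _ v

@[simp]
theorem hyperplaneReflection_mul_self (β : V) :
    hyperplaneReflection β * hyperplaneReflection β = 1 :=
  Submodule.reflection_mul_reflection _

@[simp]
theorem hyperplaneReflection_inv (β : V) : (hyperplaneReflection β)⁻¹ = hyperplaneReflection β :=
  Submodule.reflection_inv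

theorem hyperplaneReflection_neg (β : V) : hyperplaneReflection (-β) = hyperplaneReflection β := by
  ext v
  simp only [hyperplaneReflection_apply, inner_neg_right, inner_neg_left, neg_neg]
  module

theorem hyperplaneReflection_map (w : V ≃ₗᵢ[ℝ] V) (β : V) :
    hyperplaneReflection (w β) = w * hyperplaneReflection β * w⁻¹ := by
  ext v
  simp [hyperplaneReflection_apply, LinearIsometryEquiv.inner_map_eq_flip]

theorem hyperplaneReflection_apply_mem_span {S : Set V} {α β : V} (hα : α ∈ S)
    (hβ : β ∈ Submodule.span ℝ S) : hyperplaneReflection α β ∈ Submodule.span ℝ S := by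
  rw [hyperplaneReflection_apply]
  exact Submodule.sub_mem _ hβ (Submodule.smul_mem _ _ (Submodule.subset_span hα))

theorem reflectionsOn_eq_image (S : Set V) :
    RootSystemData.reflectionsOn S = hyperplaneReflection '' S := by
  ext g
  constructor
  · rintro ⟨β, hβ, hg⟩
    exact ⟨β, hβ, LinearIsometryEquiv.ext fun v =>
      (hyperplaneReflection_apply β v).trans (hg v).symm⟩
  · rintro ⟨β, hβ, rfl⟩
    exact ⟨β, hβ, hyperplaneReflection_apply β⟩

theorem reflectionSubgroup_eq_closure (S : Set V) :
    reflectionSubgroup S = Subgroup.closure (hyperplaneReflection '' S) := by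
  rw [reflectionSubgroup, reflectionsOn_eq_image]

theorem hyperplaneReflection_mem_reflectionSubgroup {S : Set V} {β : V} (hβ : β ∈ S) :
    hyperplaneReflection β ∈ reflectionSubgroup S := by
  rw [reflectionSubgroup_eq_closure]
  exact Subgroup.subset_closure ⟨β, hβ, rfl⟩

theorem exists_list_of_mem_reflectionSubgroup {S : Set V} {w : V ≃ₗᵢ[ℝ] V}
    (hw : w ∈ reflectionSubgroup S) :
    ∃ L : List V, (∀ β ∈ L, β ∈ S) ∧ (L.map hyperplaneReflection).prod = w := by
  rw [reflectionSubgroup_eq_closure] at hw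
  induction hw using Subgroup.closure_induction'' with
  | mem _ h =>
    obtain ⟨β, hβ, rfl⟩ := h
    exact ⟨[β], by simpa using hβ, by simp⟩
  | inv_mem _ h =>
    obtain ⟨β, hβ, rfl⟩ := h
    exact ⟨[β], by simpa using hβ, by simp⟩
  | one => exact ⟨[], by simp, rfl⟩
  | mul _ _ _ _ hx hy =>
    obtain ⟨L₁, h₁, rfl⟩ := hx
    obtain ⟨L₂, h₂, rfl⟩ := hy
    exact ⟨L₁ ++ L₂, fun β hβ => (List.mem_append.1 hβ).elim (h₁ β) (h₂ β), by simp⟩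

theorem conj_mem_reflectionSubgroup {S : Set V} {n u : V ≃ₗᵢ[ℝ] V}
    (hS : ∀ β ∈ S, hyperplaneReflection (n β) ∈ reflectionSubgroup S)
    (hu : u ∈ reflectionSubgroup S) : n * u * n⁻¹ ∈ reflectionSubgroup S := by
  have hmap : (reflectionSubgroup S).map (MulAut.conj n).toMonoidHom ≤ reflectionSubgroup S := by
    rw [reflectionSubgroup_eq_closure, MonoidHom.map_closure, Subgroup.closure_le]
    rintro _ ⟨_, ⟨β, hβ, rfl⟩, rfl⟩
    simpa [← reflectionSubgroup_eq_closure, hyperplaneReflection_map] using hS β hβ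
  exact hmap ⟨u, hu, rfl⟩

theorem mem_perpSpace_iff (I : Finset V) (v : V) :
    v ∈ perpSpace I ↔ v ∈ (Submodule.span ℝ (I : Set V))ᗮ := by
  rw [Submodule.mem_orthogonal]
  constructor
  · intro hv u hu
    induction hu using Submodule.span_induction with
    | mem x hx => exact hv x hx
    | zero => exact inner_zero_left v
    | add x y _ _ hx hy => rw [inner_add_left, hx, hy, add_zero]
    | smul a x _ hx => rw [real_inner_smul_left, hx, mul_zero]
  · exact fun hv α hα => hv α (Submodule.subset_span hα)

theorem apply_mem_span_of_image_perpSpace_eq {I : Finset V} {w : V ≃ₗᵢ[ℝ] V}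
    (hw : w '' perpSpace I = perpSpace I)
    {x : V} (hx : x ∈ Submodule.span ℝ (I : Set V)) : w x ∈ Submodule.span ℝ (I : Set V) := by
  rw [← Submodule.orthogonal_orthogonal (Submodule.span ℝ (I : Set V)), Submodule.mem_orthogonal]
  intro y hy
  obtain ⟨z, hz, rfl⟩ : y ∈ w '' perpSpace I := by rwa [hw, mem_perpSpace_iff]
  rw [LinearIsometryEquiv.inner_map_map, real_inner_comm]
  exact (Submodule.mem_orthogonal _ _).1 ((mem_perpSpace_iff I z).1 hz) x hx

end Reflection

namespace RootSystemData

variable {V : Type} [NormedAddCommGroup V] [InnerProductSpace ℝ V] (R : RootSystemData V)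

theorem ne_zero_of_mem_roots {β : V} (hβ : β ∈ R.roots) : β ≠ 0 :=
  fun h => R.zero_not_mem (h ▸ hβ)

theorem mem_roots_of_mem_simples {α : V} (hα : α ∈ R.simples) : α ∈ R.roots :=
  R.pos_subset (R.simples_subset hα)

theorem hyperplaneReflection_apply_mem_roots {α β : V} (hα : α ∈ R.roots) (hβ : β ∈ R.roots) :
    hyperplaneReflection α β ∈ R.roots := by
  rw [hyperplaneReflection_apply]
  exact R.reflect_mem α hα β hβ

theorem weyl_eq_reflectionSubgroup : R.weyl = reflectionSubgroup (R.roots : Set V) := rfl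

theorem reflectionSubgroup_le_weyl {S : Set V} (hS : S ⊆ R.roots) :
    reflectionSubgroup S ≤ R.weyl :=
  Subgroup.closure_mono fun _ ⟨β, hβ, hg⟩ => ⟨β, hS hβ, hg⟩

theorem apply_mem_roots_of_mem_weyl {w : V ≃ₗᵢ[ℝ] V} (hw : w ∈ R.weyl) {β : V}
    (hβ : β ∈ R.roots) : w β ∈ R.roots := by
  rw [weyl_eq_reflectionSubgroup, reflectionSubgroup_eq_closure] at hw
  induction hw using Subgroup.closure_induction'' generalizing β with
  | mem _ h =>
    obtain ⟨α, hα, rfl⟩ := h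
    exact R.hyperplaneReflection_apply_mem_roots hα hβ
  | inv_mem _ h =>
    obtain ⟨α, hα, rfl⟩ := h
    rw [hyperplaneReflection_inv]
    exact R.hyperplaneReflection_apply_mem_roots hα hβ
  | one => exact hβ
  | mul _ _ _ _ hx hy => exact hx (hy hβ)

def normSubgroup (I : Finset V) : Subgroup (V ≃ₗᵢ[ℝ] V) where
  carrier := normSet R I
  mul_mem' := fun ⟨ha, ha'⟩ ⟨hb, hb'⟩ =>
    ⟨R.weyl.mul_mem ha hb, by rw [LinearIsometryEquiv.coe_mul, Set.image_comp, hb', ha']⟩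
  one_mem' := ⟨R.weyl.one_mem, by rw [LinearIsometryEquiv.coe_one, Set.image_id]⟩
  inv_mem' := by
    rintro a ⟨ha, ha'⟩
    refine ⟨R.weyl.inv_mem ha, ?_⟩
    conv_lhs => rw [← ha']
    rw [LinearIsometryEquiv.coe_inv]
    exact a.toEquiv.symm_image_image _

theorem reflectionSubgroup_le_normSubgroup {I : Finset V} (hI : I ⊆ R.simples) :
    reflectionSubgroup (I : Set V) ≤ R.normSubgroup I := by
  rw [reflectionSubgroup_eq_closure, Subgroup.closure_le]
  rintro _ ⟨α, hα, rfl⟩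
  refine ⟨R.reflectionSubgroup_le_weyl (fun β hβ => R.mem_roots_of_mem_simples (hI hβ))
    (hyperplaneReflection_mem_reflectionSubgroup hα), ?_⟩
  rw [Set.image_congr fun v (hv : v ∈ perpSpace I) =>
    hyperplaneReflection_apply_of_inner_eq_zero (hv α hα), Set.image_id']

theorem mem_span_simples_of_mem_roots {β : V} (hβ : β ∈ R.roots) :
    β ∈ Submodule.span ℝ (R.simples : Set V) := by
  have hpos : ∀ γ ∈ R.pos, γ ∈ Submodule.span ℝ (R.simples : Set V) := by
    intro γ hγ
    obtain ⟨c, hc, rfl⟩ := R.pos_sum_of_simples γ hγ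
    exact Submodule.finsuppSum_mem _ _ _ _
      fun α hα => Submodule.smul_mem _ _ (Submodule.subset_span (hc (Finsupp.mem_support_iff.2 hα)))
  rcases R.mem_pos_or_neg_mem_pos β hβ with h | h
  · exact hpos β h
  · simpa using Submodule.neg_mem _ (hpos _ h)

def simpleBasis : Module.Basis R.simples ℝ V :=
  .mk R.simples_linearIndependent <| by
    rw [← R.span_roots, Subtype.range_coe_subtype, Submodule.span_le]
    exact fun β hβ => R.mem_span_simples_of_mem_roots hβ

@[simp]
theorem simpleBasis_apply (α : R.simples) : R.simpleBasis α = α :=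
  Module.Basis.mk_apply _ _ _

theorem simpleBasis_repr_nonneg {β : V} (hβ : β ∈ R.pos) (γ : R.simples) :
    0 ≤ R.simpleBasis.repr β γ := by
  obtain ⟨c, hc, rfl⟩ := R.pos_sum_of_simples β hβ
  simp only [Finsupp.sum, map_sum, map_smul, Finsupp.coe_finsetSum, Finset.sum_apply,
    Finsupp.smul_apply, smul_eq_mul]
  refine Finset.sum_nonneg fun α hα => mul_nonneg (Nat.cast_nonneg _) ?_
  have hα' : α = R.simpleBasis ⟨α, hc hα⟩ := (R.simpleBasis_apply ⟨α, hc hα⟩).symm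
  rw [hα', Module.Basis.repr_self]
  exact Finsupp.single_nonneg.2 zero_le_one γ

theorem simpleBasis_repr_nonpos {β : V} (hβ : -β ∈ R.pos) (γ : R.simples) :
    R.simpleBasis.repr β γ ≤ 0 := by
  simpa using R.simpleBasis_repr_nonneg hβ γ

theorem mem_pos_of_simpleBasis_repr_nonneg {β : V} (hβ : β ∈ R.roots)
    (h : ∀ γ, 0 ≤ R.simpleBasis.repr β γ) : β ∈ R.pos := by
  refine (R.mem_pos_or_neg_mem_pos β hβ).resolve_right fun hneg => R.ne_zero_of_mem_roots hβ ?_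
  refine R.simpleBasis.repr.map_eq_zero_iff.1 (Finsupp.ext fun γ => ?_)
  exact le_antisymm (R.simpleBasis_repr_nonpos hneg γ) (h γ)

theorem mem_pos_of_simpleBasis_repr_pos {β : V} (hβ : β ∈ R.roots) {γ : R.simples}
    (h : 0 < R.simpleBasis.repr β γ) : β ∈ R.pos :=
  (R.mem_pos_or_neg_mem_pos β hβ).resolve_right fun hneg =>
    (R.simpleBasis_repr_nonpos hneg γ).not_gt h

theorem simpleBasis_repr_eq_zero_of_mem_span {I : Finset V} (hI : I ⊆ R.simples) {β : V}
    (hβ : β ∈ Submodule.span ℝ (I : Set V)) {γ : R.simples} (hγ : (γ : V) ∉ I) :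
    R.simpleBasis.repr β γ = 0 := by
  have hI' : (I : Set V) = R.simpleBasis '' {α | (α : V) ∈ I} := by
    ext x
    simp only [Set.mem_image, Set.mem_ofPred_eq, simpleBasis_apply, Subtype.exists,
      exists_and_right, exists_eq_right, Finset.mem_coe]
    exact ⟨fun hx => ⟨hI hx, hx⟩, fun ⟨_, hx⟩ => hx⟩
  rw [hI', Module.Basis.mem_span_image] at hβ
  exact Finsupp.notMem_support_iff.1 fun h => hγ (hβ h)

theorem exists_simpleBasis_repr_pos_of_ne {α β : V} (hα : α ∈ R.simples) (hβ : β ∈ R.pos)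
    (hne : β ≠ α) : ∃ γ : R.simples, (γ : V) ≠ α ∧ 0 < R.simpleBasis.repr β γ := by
  by_contra! h
  have hβα : β = R.simpleBasis.repr β ⟨α, hα⟩ • α := by
    conv_lhs => rw [← R.simpleBasis.sum_repr β]
    rw [Finset.sum_eq_single ⟨α, hα⟩ (fun γ _ hγ => ?_) (by simp), simpleBasis_apply]
    rw [le_antisymm (h γ (fun h' => hγ (Subtype.ext h')))
      (R.simpleBasis_repr_nonneg hβ γ), zero_smul]
  rcases R.reduced α (R.mem_roots_of_mem_simples hα) _ (hβα ▸ R.pos_subset hβ) with h1 | h1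
  · exact hne (by rw [hβα, h1, one_smul])
  · have := R.simpleBasis_repr_nonneg hβ ⟨α, hα⟩
    linarith

theorem hyperplaneReflection_apply_mem_pos {α β : V} (hα : α ∈ R.simples) (hβ : β ∈ R.pos)
    (hne : β ≠ α) : hyperplaneReflection α β ∈ R.pos := by
  obtain ⟨γ, hγα, hγ⟩ := R.exists_simpleBasis_repr_pos_of_ne hα hβ hne
  refine R.mem_pos_of_simpleBasis_repr_pos
    (R.hyperplaneReflection_apply_mem_roots (R.mem_roots_of_mem_simples hα) (R.pos_subset hβ))
    (γ := γ) ?_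
  have hαγ : R.simpleBasis.repr α γ = 0 := by
    rw [show α = R.simpleBasis ⟨α, hα⟩ by simp, Module.Basis.repr_self,
      Finsupp.single_eq_of_ne (fun h => hγα (congrArg Subtype.val h))]
  simpa [hyperplaneReflection_apply, hαγ] using hγ

theorem exists_simpleBasis_repr_pos_inner_pos {β : V} (hβ : β ∈ R.pos) :
    ∃ γ : R.simples, 0 < R.simpleBasis.repr β γ ∧ 0 < ⟪β, (γ : V)⟫ := by
  have hsum : ⟪β, β⟫ = ∑ γ, R.simpleBasis.repr β γ * ⟪β, (γ : V)⟫ := by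
    conv_lhs => arg 3; rw [← R.simpleBasis.sum_repr β]
    simp [inner_sum, real_inner_smul_right]
  have hpos : (0 : ℝ) < ⟪β, β⟫ :=
    real_inner_self_pos.2 (R.ne_zero_of_mem_roots (R.pos_subset hβ))
  obtain ⟨γ, -, hγ⟩ := Finset.exists_lt_of_sum_lt (f := fun _ => (0 : ℝ))
    (g := fun γ => R.simpleBasis.repr β γ * ⟪β, (γ : V)⟫)
    (by rw [Finset.sum_const_zero, ← hsum]; exact hpos)
  exact ⟨γ, (pos_and_pos_or_neg_and_neg_of_mul_pos hγ).resolve_right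
    fun h => (R.simpleBasis_repr_nonneg hβ γ).not_gt h.1⟩

theorem one_le_two_mul_inner_div_inner {β γ : V} (hβ : β ∈ R.roots) (hγ : γ ∈ R.roots)
    (h : 0 < ⟪β, γ⟫) : 1 ≤ 2 * ⟪β, γ⟫ / ⟪γ, γ⟫ := by
  obtain ⟨m, hm⟩ := R.crystallographic β hβ γ hγ
  have hγγ : (0 : ℝ) < ⟪γ, γ⟫ := real_inner_self_pos.2 (R.ne_zero_of_mem_roots hγ)
  have hm₀ : (0 : ℝ) < m := (pos_iff_pos_of_mul_pos (hm ▸ by positivity)).2 hγγ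
  rw [hm, mul_div_cancel_right₀ _ hγγ.ne']
  exact_mod_cast (show (0 : ℤ) < m by exact_mod_cast hm₀)

theorem sumCoords_simpleBasis_nonneg {β : V} (hβ : β ∈ R.pos) :
    0 ≤ R.simpleBasis.sumCoords β := by
  rw [Module.Basis.coe_sumCoords]
  exact Finsupp.sum_nonneg fun γ _ => R.simpleBasis_repr_nonneg hβ γ

theorem hyperplaneReflection_mem_reflectionSubgroup_of_mem_posIn {I : Finset V}
    (hI : I ⊆ R.simples) {β : V} (hβ : β ∈ R.posIn I) :
    hyperplaneReflection β ∈ reflectionSubgroup (I : Set V) := by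
  obtain ⟨n, hn⟩ := exists_nat_gt (R.simpleBasis.sumCoords β)
  induction n generalizing β with
  | zero => exact absurd (by simpa using hn) (R.sumCoords_simpleBasis_nonneg hβ.1).not_gt
  | succ n ih =>
    obtain ⟨⟨γ, hγs⟩, hγ, hβγ⟩ := R.exists_simpleBasis_repr_pos_inner_pos hβ.1
    have hγI : γ ∈ I := by
      by_contra h
      exact hγ.ne' (R.simpleBasis_repr_eq_zero_of_mem_span hI hβ.2 h)
    have hsγ := hyperplaneReflection_mem_reflectionSubgroup (S := (I : Set V)) hγI
    by_cases hβγ' : β = γ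
    · rwa [hβγ']
    have hβ' : hyperplaneReflection γ β ∈ R.posIn I :=
      ⟨R.hyperplaneReflection_apply_mem_pos hγs hβ.1 hβγ',
        hyperplaneReflection_apply_mem_span hγI hβ.2⟩
    have hht : R.simpleBasis.sumCoords (hyperplaneReflection γ β) ≤
        R.simpleBasis.sumCoords β - 1 := by
      have h1 := R.one_le_two_mul_inner_div_inner (R.pos_subset hβ.1)
        (R.mem_roots_of_mem_simples hγs) hβγ
      have h2 : R.simpleBasis.sumCoords γ = 1 := by
        simpa using R.simpleBasis.sumCoords_self_apply (i := ⟨γ, hγs⟩)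
      rw [hyperplaneReflection_apply, map_sub, map_smul, h2, smul_eq_mul, mul_one]
      linarith
    have hconj := hyperplaneReflection_map (hyperplaneReflection γ) (hyperplaneReflection γ β)
    rw [hyperplaneReflection_hyperplaneReflection, hyperplaneReflection_inv] at hconj
    rw [hconj]
    push_cast at hn
    exact Subgroup.mul_mem _ (Subgroup.mul_mem _ hsγ (ih hβ' (by linarith))) hsγ

theorem hyperplaneReflection_mem_reflectionSubgroup_of_mem_rootsIn {I : Finset V}
    (hI : I ⊆ R.simples) {β : V} (hβ : β ∈ R.rootsIn I) :
    hyperplaneReflection β ∈ reflectionSubgroup (I : Set V) := by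
  rcases R.mem_pos_or_neg_mem_pos β hβ.1 with h | h
  · exact R.hyperplaneReflection_mem_reflectionSubgroup_of_mem_posIn hI ⟨h, hβ.2⟩
  · rw [← hyperplaneReflection_neg]
    exact R.hyperplaneReflection_mem_reflectionSubgroup_of_mem_posIn hI
      ⟨h, Submodule.neg_mem _ hβ.2⟩

theorem exists_eraseIdx_of_apply_notMem_pos {L : List V} (hL : ∀ γ ∈ L, γ ∈ R.simples)
    {α : V} (hα : α ∈ R.simples) (h : (L.map hyperplaneReflection).prod α ∉ R.pos) :
    ∃ i < L.length, (L.map hyperplaneReflection).prod * hyperplaneReflection α =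
      ((L.eraseIdx i).map hyperplaneReflection).prod := by
  induction L with
  | nil => exact absurd (R.simples_subset hα) (by simpa using h)
  | cons γ L ih =>
    set w := (L.map hyperplaneReflection).prod
    by_cases hw : w α ∈ R.pos
    · have hwα : w α = γ := by
        by_contra hne
        exact h (by simpa [w] using
          R.hyperplaneReflection_apply_mem_pos (hL γ List.mem_cons_self) hw hne)
      have hconj := hyperplaneReflection_map w α
      rw [hwα] at hconj
      refine ⟨0, by simp, ?_⟩
      rw [List.eraseIdx_cons_zero, List.map_cons, List.prod_cons, hconj, inv_mul_cancel_right,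
        mul_assoc, hyperplaneReflection_mul_self, mul_one]
    · obtain ⟨i, hi, heq⟩ := ih (fun β hβ => hL β (List.mem_cons_of_mem _ hβ)) hw
      refine ⟨i + 1, by simpa using hi, ?_⟩
      rw [List.eraseIdx_cons_succ, List.map_cons, List.prod_cons, List.map_cons, List.prod_cons,
        mul_assoc, heq]

theorem prod_map_hyperplaneReflection_eq_one {L : List V} (hL : ∀ γ ∈ L, γ ∈ R.simples)
    (hpos : ∀ γ ∈ L, (L.map hyperplaneReflection).prod γ ∈ R.pos) :
    (L.map hyperplaneReflection).prod = 1 := by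
  induction hn : L.length using Nat.strong_induction_on generalizing L with
  | _ n ih =>
  rcases L.eq_nil_or_concat' with rfl | ⟨L₁, α, rfl⟩
  · rfl
  have hα : α ∈ R.simples := hL α (by simp)
  have hL₁ : ∀ γ ∈ L₁, γ ∈ R.simples := fun γ hγ => hL γ (by simp [hγ])
  have hneg : (L₁.map hyperplaneReflection).prod α ∉ R.pos := by
    intro h
    have hα' := hpos α (by simp)
    simp only [List.map_append, List.map_cons, List.map_nil, List.prod_append, List.prod_cons,
      List.prod_nil, mul_one, LinearIsometryEquiv.coe_mul, Function.comp_apply,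
      hyperplaneReflection_self, map_neg] at hα'
    exact R.neg_not_pos _ h hα'
  obtain ⟨i, hi, heq⟩ := R.exists_eraseIdx_of_apply_notMem_pos hL₁ hα hneg
  have hprod : ((L₁ ++ [α]).map hyperplaneReflection).prod =
      ((L₁.eraseIdx i).map hyperplaneReflection).prod := by
    simp [heq]
  rw [hprod] at hpos ⊢
  refine ih _ ?_ (fun γ hγ => hL₁ γ (List.mem_of_mem_eraseIdx hγ))
    (fun γ hγ => hpos γ (by simp [List.mem_of_mem_eraseIdx hγ])) rfl
  simp only [← hn, List.length_eraseIdx_of_lt hi, List.length_append, List.length_singleton]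
  omega

theorem exists_mem_inversionSet_of_mem_inter_posIn {I : Finset V} (hI : I ⊆ R.simples)
    {v : V ≃ₗᵢ[ℝ] V} (hv : v ∈ R.weyl) {β : V} (hβ : β ∈ R.inversionSet v ∩ R.posIn I) :
    ∃ α ∈ I, α ∈ R.inversionSet v := by
  by_contra! h
  have hvα : ∀ α ∈ I, v α ∈ R.pos := fun α hα =>
    (R.mem_pos_or_neg_mem_pos _ (R.apply_mem_roots_of_mem_weyl hv
      (R.mem_roots_of_mem_simples (hI hα)))).resolve_right
      fun hn => h α hα ⟨R.simples_subset (hI hα), hn⟩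
  have hvβ : v β ∈ R.pos := by
    refine R.mem_pos_of_simpleBasis_repr_nonneg
      (R.apply_mem_roots_of_mem_weyl hv (R.pos_subset hβ.2.1)) fun γ => ?_
    rw [← R.simpleBasis.sum_repr β]
    simp only [map_sum, map_smul, Finsupp.coe_finsetSum, Finset.sum_apply, Finsupp.smul_apply,
      smul_eq_mul, simpleBasis_apply]
    refine Finset.sum_nonneg fun α _ => ?_
    by_cases hαI : (α : V) ∈ I
    · exact mul_nonneg (R.simpleBasis_repr_nonneg hβ.2.1 α)
        (R.simpleBasis_repr_nonneg (hvα α hαI) γ)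
    · rw [R.simpleBasis_repr_eq_zero_of_mem_span hI hβ.2.2 hαI, zero_mul]
  exact R.neg_not_pos _ hvβ hβ.1.2

theorem ncard_inversionSet_mul_hyperplaneReflection_lt {I : Finset V} (hI : I ⊆ R.simples)
    {v : V ≃ₗᵢ[ℝ] V} {α : V} (hαI : α ∈ I) (hα : α ∈ R.inversionSet v) :
    (R.inversionSet (v * hyperplaneReflection α) ∩ R.posIn I).ncard <
      (R.inversionSet v ∩ R.posIn I).ncard := by
  have hfin : (R.inversionSet v ∩ R.posIn I).Finite :=
    R.pos.finite_toSet.subset fun β hβ => hβ.1.1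
  have hmaps : Set.MapsTo (hyperplaneReflection α)
      (R.inversionSet (v * hyperplaneReflection α) ∩ R.posIn I)
      ((R.inversionSet v ∩ R.posIn I) \ {α}) := by
    rintro β ⟨⟨hβ, hvβ⟩, -, hβI⟩
    have hβα : β ≠ α := by
      rintro rfl
      simp only [LinearIsometryEquiv.coe_mul, Function.comp_apply, hyperplaneReflection_self,
        map_neg, neg_neg] at hvβ
      exact R.neg_not_pos _ hvβ hα.2
    have hsβ := R.hyperplaneReflection_apply_mem_pos (hI hαI) hβ hβα
    refine ⟨⟨⟨hsβ, hvβ⟩, hsβ, hyperplaneReflection_apply_mem_span hαI hβI⟩, fun h => ?_⟩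
    have : β = -α := by
      rw [← hyperplaneReflection_hyperplaneReflection α β, Set.mem_singleton_iff.1 h,
        hyperplaneReflection_self]
    exact R.neg_not_pos α hα.1 (this ▸ hβ)
  calc _ = (hyperplaneReflection α ''
          (R.inversionSet (v * hyperplaneReflection α) ∩ R.posIn I)).ncard :=
        (Set.ncard_image_of_injective _ (hyperplaneReflection α).injective).symm
    _ ≤ ((R.inversionSet v ∩ R.posIn I) \ {α}).ncard :=
        Set.ncard_le_ncard hmaps.image_subset hfin.sdiff
    _ < _ := Set.ncard_sdiff_singleton_lt_of_mem ⟨hα, hα.1, Submodule.subset_span hαI⟩ hfin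

theorem exists_mem_reflectionSubgroup_mapsTo_pos {I : Finset V} (hI : I ⊆ R.simples)
    {v : V ≃ₗᵢ[ℝ] V} (hv : v ∈ R.weyl) :
    ∃ u ∈ reflectionSubgroup (I : Set V), Set.MapsTo (v * u) (R.posIn I) R.pos := by
  have hWI : reflectionSubgroup (I : Set V) ≤ R.weyl :=
    R.reflectionSubgroup_le_weyl fun β hβ => R.mem_roots_of_mem_simples (hI hβ)
  obtain ⟨u, hu, hmin⟩ := (InvImage.wf (fun u => (R.inversionSet (v * u) ∩ R.posIn I).ncard)
    wellFounded_lt).has_min (reflectionSubgroup (I : Set V) : Set (V ≃ₗᵢ[ℝ] V))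
    ⟨1, Subgroup.one_mem _⟩
  refine ⟨u, hu, fun β hβ => ?_⟩
  have hvu : v * u ∈ R.weyl := R.weyl.mul_mem hv (hWI hu)
  by_contra hneg
  have hinv : β ∈ R.inversionSet (v * u) ∩ R.posIn I :=
    ⟨⟨hβ.1, (R.mem_pos_or_neg_mem_pos _
      (R.apply_mem_roots_of_mem_weyl hvu (R.pos_subset hβ.1))).resolve_left hneg⟩, hβ⟩
  obtain ⟨α, hαI, hα⟩ := R.exists_mem_inversionSet_of_mem_inter_posIn hI hvu hinv
  refine hmin (u * hyperplaneReflection α)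
    (Subgroup.mul_mem _ hu (hyperplaneReflection_mem_reflectionSubgroup hαI)) ?_
  simpa [InvImage, mul_assoc] using
    R.ncard_inversionSet_mul_hyperplaneReflection_lt hI hαI hα

theorem mem_compSet_of_mapsTo_pos {I : Finset V} {c : V ≃ₗᵢ[ℝ] V} (hc : c ∈ normSet R I)
    (h : Set.MapsTo c (R.posIn I) R.pos) : c ∈ compSet R I := by
  have hmaps : Set.MapsTo c (R.posIn I) (R.posIn I) := fun β hβ =>
    ⟨h hβ, apply_mem_span_of_image_perpSpace_eq hc.2 hβ.2⟩
  have hfin : (R.posIn I).Finite := R.pos.finite_toSet.subset fun β hβ => hβ.1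
  exact ⟨hc, ((hfin.injOn_iff_bijOn_of_mapsTo hmaps).1 c.injective.injOn).image_eq⟩

theorem eq_one_of_mem_compSet_of_mem_reflectionSubgroup {I : Finset V} (hI : I ⊆ R.simples)
    {w : V ≃ₗᵢ[ℝ] V} (hc : w ∈ compSet R I) (hw : w ∈ reflectionSubgroup (I : Set V)) :
    w = 1 := by
  obtain ⟨L, hL, rfl⟩ := exists_list_of_mem_reflectionSubgroup hw
  refine R.prod_map_hyperplaneReflection_eq_one (fun γ hγ => hI (hL γ hγ)) fun γ hγ => ?_
  have hγ' : γ ∈ R.posIn I := ⟨R.simples_subset (hI (hL γ hγ)), Submodule.subset_span (hL γ hγ)⟩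
  exact (hc.2 ▸ Set.mem_image_of_mem _ hγ').1

end RootSystemData

end

theorem statement13_general {V : Type} [NormedAddCommGroup V] [InnerProductSpace ℝ V]
    (R : RootSystemData V)
    (I : Finset V) (hI : I ⊆ R.simples) :
    ((reflectionSubgroup (↑I : Set V) : Set (V ≃ₗᵢ[ℝ] V)) ⊆ normSet R I) ∧
    (∀ n ∈ normSet R I, ∀ u ∈ reflectionSubgroup (↑I : Set V),
      n * u * n⁻¹ ∈ reflectionSubgroup (↑I : Set V)) ∧
    (compSet R I ∩ (reflectionSubgroup (↑I : Set V) : Set (V ≃ₗᵢ[ℝ] V)) = {1}) ∧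
    (∀ n ∈ normSet R I, ∃ c ∈ compSet R I,
      ∃ u ∈ reflectionSubgroup (↑I : Set V), n = c * u) := by
  have hWI : reflectionSubgroup (I : Set V) ≤ R.normSubgroup I :=
    R.reflectionSubgroup_le_normSubgroup hI
  refine ⟨hWI, fun n hn u hu => conj_mem_reflectionSubgroup (fun α hα => ?_) hu, ?_, fun n hn => ?_⟩
  · exact R.hyperplaneReflection_mem_reflectionSubgroup_of_mem_rootsIn hI
      ⟨R.apply_mem_roots_of_mem_weyl hn.1 (R.mem_roots_of_mem_simples (hI hα)),
        apply_mem_span_of_image_perpSpace_eq hn.2 (Submodule.subset_span hα)⟩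
  · refine Set.eq_singleton_iff_unique_mem.2 ⟨⟨⟨(R.normSubgroup I).one_mem, ?_⟩,
      Subgroup.one_mem _⟩, fun w hw => ?_⟩
    · rw [LinearIsometryEquiv.coe_one, Set.image_id]
    · exact R.eq_one_of_mem_compSet_of_mem_reflectionSubgroup hI hw.1 hw.2
  · obtain ⟨u, hu, hmaps⟩ := R.exists_mem_reflectionSubgroup_mapsTo_pos hI hn.1
    have hnu : n * u ∈ normSet R I := (R.normSubgroup I).mul_mem hn (hWI hu)
    exact ⟨n * u, R.mem_compSet_of_mapsTo_pos hnu hmaps, u⁻¹, Subgroup.inv_mem _ hu, by group⟩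

/-- `N(𝔞)` is the internal semidirect product `C(𝔞,I) ⋉ W_I`: `W_I ⊆ N(𝔞)` is
normal in `N(𝔞)`, `C(𝔞,I) ∩ W_I = {1}` and `N(𝔞) = C(𝔞,I) · W_I`. -/
theorem statement13 {V : Type} [NormedAddCommGroup V] [InnerProductSpace ℝ V]
    [FiniteDimensional ℝ V] (R : RootSystemData V)
    (I : Finset V) (hI : I ⊆ R.simples) :
    ((reflectionSubgroup (↑I : Set V) : Set (V ≃ₗᵢ[ℝ] V)) ⊆ normSet R I) ∧
    (∀ n ∈ normSet R I, ∀ u ∈ reflectionSubgroup (↑I : Set V),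
      n * u * n⁻¹ ∈ reflectionSubgroup (↑I : Set V)) ∧
    (compSet R I ∩ (reflectionSubgroup (↑I : Set V) : Set (V ≃ₗᵢ[ℝ] V)) = {1}) ∧
    (∀ n ∈ normSet R I, ∃ c ∈ compSet R I,
      ∃ u ∈ reflectionSubgroup (↑I : Set V), n = c * u) :=
  statement13_general R I hI
end
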